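/- (Lemma: the number of Type 2 nodes) Let T be a p-string of length n ≥ 1 ending with a sentinel symbol $ ∈ Σ that occurs nowhere else in T. Then the number of Type 2 nodes of PLST(T), i.e., the cardinality of V2 = { u ∈ PrevSub(T) : u ≠ ε, u ∉ V1, and sl(u) ∈ V1 }, is smaller than 2n. -/

import Mathlib

/-!
Split the Type 2 nodes `u` according to whether the leftmost occurrence of `sl u` ends strictly
before the leftmost occurrence of `u`. If it does, `u` is determined by the end position of its
leftmost occurrence, which lies in `[1, n]`: a shorter node ending there would be an iterated
suffix link of `sl u` and so would occur earlier. If it does not, `u` is recovered from `sl u`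
(the encoding of the window one symbol longer ending at the same position), and `sl u` is
branching, since any proper extension of `u` yields one of `sl u`. In the prefix tree
`PrevSub T` there are fewer branching nodes than leaves, and each leaf encodes one of the `n`
nonempty suffixes of `T`.
-/

open List

variable {σ π : Type*}

/-- The prev-encoding symbol of `w` at (0-indexed) position `i`:
constants are kept; a parameter is encoded by the distance to its
previous occurrence, or `0` if it has no previous occurrence. -/
def prevAt [DecidableEq σ] [DecidableEq π] (w : List (σ ⊕ π)) (i : ℕ) : σ ⊕ ℕ :=
  match w[i]? with
  | some (Sum.inl a) => Sum.inl a
  | some (Sum.inr x) =>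
      let s := (Finset.range i).filter (fun j => w[j]? = some (Sum.inr x))
      if h : s.Nonempty then Sum.inr (i - s.max' h) else Sum.inr 0
  | none => Sum.inr 0

/-- The prev-encoding `⟨w⟩` of a p-string `w`. -/
def prevEncode [DecidableEq σ] [DecidableEq π] (w : List (σ ⊕ π)) : List (σ ⊕ ℕ) :=
  (List.range w.length).map (prevAt w)

/-- The `k`-re-encoding `⟨u⟩ₖ` of a pv-string `u`: a numeric symbol `u[i]`
(1-indexed) is replaced by `0` whenever `u[i] ≥ i - k + 1`. -/
def reEncode (k : ℕ) (u : List (σ ⊕ ℕ)) : List (σ ⊕ ℕ) :=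
  (List.range u.length).map (fun i =>
    match u[i]? with
    | some (Sum.inl a) => Sum.inl a
    | some (Sum.inr m) => if i + 2 ≤ m + k then Sum.inr (0 : ℕ) else Sum.inr m
    | none => Sum.inr 0)

/-- The implicit suffix link `sl(u) = ⟨u[2:]⟩₁`. -/
def sl (u : List (σ ⊕ ℕ)) : List (σ ⊕ ℕ) := reEncode 1 u.tail

/-- The set of prev-encoded substrings of `T`. -/
def PrevSub [DecidableEq σ] [DecidableEq π] (T : List (σ ⊕ π)) : Set (List (σ ⊕ ℕ)) :=
  { u | ∃ w, w <:+: T ∧ u = prevEncode w }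

/-- `u` is a leaf of `PrevSub T`: it belongs to `PrevSub T` and is not a
proper prefix of any element of `PrevSub T`. -/
def IsLeaf [DecidableEq σ] [DecidableEq π] (T : List (σ ⊕ π)) (u : List (σ ⊕ ℕ)) : Prop :=
  u ∈ PrevSub T ∧ ∀ v ∈ PrevSub T, u <+: v → u = v

/-- `u` is a branching element of `PrevSub T`: two distinct one-symbol
extensions of `u` belong to `PrevSub T`. -/
def Branching [DecidableEq σ] [DecidableEq π] (T : List (σ ⊕ π)) (u : List (σ ⊕ ℕ)) : Prop :=
  u ∈ PrevSub T ∧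
    ∃ a b : σ ⊕ ℕ, a ≠ b ∧ u ++ [a] ∈ PrevSub T ∧ u ++ [b] ∈ PrevSub T

/-- The Type 1 nodes of the PLST: leaves and branching elements of `PrevSub T`. -/
def TypeOne [DecidableEq σ] [DecidableEq π] (T : List (σ ⊕ π)) (u : List (σ ⊕ ℕ)) : Prop :=
  IsLeaf T u ∨ Branching T u

/-- The Type 2 nodes of the PLST: nonempty non-Type-1 elements of `PrevSub T`
whose suffix link points at a Type 1 node. -/
def TypeTwo [DecidableEq σ] [DecidableEq π] (T : List (σ ⊕ π)) (u : List (σ ⊕ ℕ)) : Prop :=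
  u ∈ PrevSub T ∧ u ≠ [] ∧ ¬ TypeOne T u ∧ TypeOne T (sl u)

namespace Finset

theorem max'_filter_range_succ {P : ℕ → Prop} [DecidablePred P] {i : ℕ}
    (h : ((range (i + 1)).filter P).Nonempty)
    (h' : ((range i).filter (fun j => P (j + 1))).Nonempty) :
    ((range (i + 1)).filter P).max' h = ((range i).filter (fun j => P (j + 1))).max' h' + 1 := by
  have hmem := max'_mem _ h'
  simp only [mem_filter, mem_range] at hmem
  rw [max'_eq_iff]
  simp only [mem_filter, mem_range]
  refine ⟨⟨by omega, hmem.2⟩, fun b hb => ?_⟩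
  rcases b with _ | b
  · omega
  · have := le_max' ((range i).filter (fun j => P (j + 1))) b
      (mem_filter.2 ⟨mem_range.2 (by omega), hb.2⟩)
    omega

theorem max'_filter_range_succ_eq_zero {P : ℕ → Prop} [DecidablePred P] {i : ℕ}
    (h : ((range (i + 1)).filter P).Nonempty)
    (h' : ¬ ((range i).filter (fun j => P (j + 1))).Nonempty) :
    ((range (i + 1)).filter P).max' h = 0 := by
  have hmem := max'_mem _ h
  generalize ((range (i + 1)).filter P).max' h = m at hmem
  rcases m with _ | m
  · rfl
  · simp only [mem_filter, mem_range] at hmem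
    exact absurd ⟨m, mem_filter.2 ⟨mem_range.2 (by omega), hmem.2⟩⟩ h'

end Finset

namespace Set

variable {α : Type*}

def leaves (S : Set (List α)) : Set (List α) := {w ∈ S | ∀ v ∈ S, w <+: v → w = v}

def branchingNodes (S : Set (List α)) : Set (List α) :=
  {w ∈ S | ∃ a b, a ≠ b ∧ w ++ [a] ∈ S ∧ w ++ [b] ∈ S}

/-- Each edge `w.dropLast → w` of the prefix tree `S` is counted once by its child: a node has
at least one child unless it is a leaf, and at least two if it is branching. -/
theorem ncard_branchingNodes_lt_ncard_leaves {S : Set (List α)} (hS : S.Finite) (hnil : [] ∈ S)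
    (hpre : ∀ v ∈ S, ∀ w, w <+: v → w ∈ S) : S.branchingNodes.ncard < S.leaves.ncard := by
  classical
  obtain ⟨S, rfl⟩ := hS.exists_finset_coe
  let children (w : List α) := (S.erase []).filter (fun v => v.dropLast = w)
  have hedges : (S.erase []).card = ∑ w ∈ S, (children w).card :=
    Finset.card_eq_sum_card_fiberwise fun v hv =>
      hpre v (Finset.mem_of_mem_erase hv) _ (dropLast_prefix v)
  have hchild : ∀ w ∈ (S : Set (List α)), 1 + (if w ∈ branchingNodes ↑S then 1 else 0) ≤
      (children w).card + (if w ∈ leaves ↑S then 1 else 0) := by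
    intro w hw
    by_cases hleaf : w ∈ leaves ↑S
    · have hnb : w ∉ branchingNodes ↑S := fun ⟨_, a, _, _, ha, _⟩ => by
        simpa using hleaf.2 _ ha (prefix_append w [a])
      simp [hleaf, hnb]
    · have hchildren : (children w).Nonempty := by
        simp only [leaves, mem_sep_iff, not_and, not_forall] at hleaf
        obtain ⟨v, hv, ⟨t, rfl⟩, hne⟩ := hleaf hw
        rcases t with _ | ⟨c, t⟩
        · exact absurd (append_nil w).symm hne
        · exact ⟨w ++ [c], by simpa [children] using hpre _ hv (w ++ [c]) ⟨t, by simp⟩⟩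
      by_cases hb : w ∈ branchingNodes ↑S
      · obtain ⟨_, a, b, hab, ha, hb'⟩ := hb
        have : 1 < (children w).card := Finset.one_lt_card.2
          ⟨w ++ [a], by simpa [children] using ha, w ++ [b], by simpa [children] using hb',
            by simpa using hab⟩
        simp only [hleaf, if_false]
        split_ifs <;> omega
      · simpa [hb, hleaf] using hchildren.card_pos
  have hsum := Finset.sum_le_sum hchild
  rw [Finset.sum_add_distrib, Finset.sum_add_distrib, ← Finset.card_filter, ← Finset.card_filter,
    ← hedges, Finset.card_erase_of_mem hnil] at hsum
  have hpos := Finset.card_pos.2 ⟨_, hnil⟩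
  have hcard : ∀ P ⊆ (S : Set (List α)), P.ncard = (S.filter (· ∈ P)).card := fun P hP => by
    rw [← ncard_coe_finset, Finset.coe_filter]
    congr 1
    ext x
    exact ⟨fun h => ⟨hP h, h⟩, And.right⟩
  rw [hcard _ fun _ h => h.1, hcard _ fun _ h => h.1]
  simp only [Finset.sum_const, smul_eq_mul, mul_one] at hsum
  omega

end Set

def reEncodeAt (k i : ℕ) : σ ⊕ ℕ → σ ⊕ ℕ
  | Sum.inl a => Sum.inl a
  | Sum.inr m => if i + 2 ≤ m + k then Sum.inr 0 else Sum.inr m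

@[simp]
lemma reEncode_length (k : ℕ) (u : List (σ ⊕ ℕ)) : (reEncode k u).length = u.length := by
  simp [reEncode]

lemma getElem_reEncode (k : ℕ) (u : List (σ ⊕ ℕ)) (i : ℕ) (h : i < (reEncode k u).length) :
    (reEncode k u)[i] = reEncodeAt k i (u[i]'(by simpa using h)) := by
  have hi : i < u.length := by simpa using h
  simp only [reEncode, getElem_map, getElem_range, getElem?_eq_getElem hi]
  cases u[i] <;> rfl

lemma reEncode_take (k m : ℕ) (u : List (σ ⊕ ℕ)) :
    reEncode k (u.take m) = (reEncode k u).take m := by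
  apply ext_getElem (by simp)
  intro i h₁ h₂
  simp [getElem_reEncode]

@[simp]
lemma sl_length (u : List (σ ⊕ ℕ)) : (sl u).length = u.length - 1 := by
  simp [sl]

lemma List.IsPrefix.sl {u v : List (σ ⊕ ℕ)} (h : u <+: v) : sl u <+: sl v := by
  rw [prefix_iff_eq_take.1 h, _root_.sl, _root_.sl, ← drop_one, ← drop_one, drop_take,
    reEncode_take]
  exact take_prefix _ _

section Encoding

variable [DecidableEq σ] [DecidableEq π]

@[simp]
lemma prevEncode_length (w : List (σ ⊕ π)) : (prevEncode w).length = w.length := by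
  simp [prevEncode]

lemma getElem_prevEncode (w : List (σ ⊕ π)) (i : ℕ) (h : i < (prevEncode w).length) :
    (prevEncode w)[i] = prevAt w i := by
  simp [prevEncode]

lemma prevAt_congr {w w' : List (σ ⊕ π)} {i : ℕ} (hw : ∀ j ≤ i, w[j]? = w'[j]?) :
    prevAt w i = prevAt w' i := by
  have hfilter : ∀ x : π, (Finset.range i).filter (fun j => w[j]? = some (Sum.inr x))
      = (Finset.range i).filter (fun j => w'[j]? = some (Sum.inr x)) := fun x =>
    Finset.filter_congr fun j hj => by rw [hw j (Finset.mem_range.1 hj).le]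
  unfold prevAt
  rw [hw i le_rfl]
  rcases w'[i]? with _ | a | x <;> simp [hfilter]

lemma prevEncode_take (w : List (σ ⊕ π)) (m : ℕ) :
    prevEncode (w.take m) = (prevEncode w).take m := by
  apply ext_getElem (by simp)
  intro i h₁ h₂
  simp only [getElem_take, getElem_prevEncode]
  simp only [prevEncode_length, length_take] at h₁
  exact prevAt_congr fun j hj => by simp [show j < m by omega]

lemma List.IsPrefix.prevEncode {w w' : List (σ ⊕ π)} (h : w <+: w') :
    _root_.prevEncode w <+: _root_.prevEncode w' := by
  rw [prefix_iff_eq_take.1 h, prevEncode_take]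
  exact take_prefix _ _

/-- Dropping the first symbol shifts every earlier occurrence by one; the encoding changes only
when the previous occurrence was the dropped symbol itself, which is when `reEncodeAt 1` resets
the distance to `0`. -/
lemma prevAt_tail (w : List (σ ⊕ π)) (i : ℕ) :
    prevAt w.tail i = reEncodeAt 1 i (prevAt w (i + 1)) := by
  rcases hx : w[i + 1]? with _ | a | x
  iterate 2 simp [prevAt, getElem?_tail, hx, reEncodeAt]
  · unfold prevAt
    simp only [getElem?_tail, hx]
    by_cases h' : ((Finset.range i).filter (fun j => w[j + 1]? = some (Sum.inr x))).Nonempty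
    · have h : ((Finset.range (i + 1)).filter (fun j => w[j]? = some (Sum.inr x))).Nonempty := by
        obtain ⟨j, hj⟩ := h'
        simp only [Finset.mem_filter, Finset.mem_range] at hj
        exact ⟨j + 1, Finset.mem_filter.2 ⟨Finset.mem_range.2 (by omega), hj.2⟩⟩
      rw [dif_pos h', dif_pos h, Finset.max'_filter_range_succ h h']
      have := Finset.max'_mem _ h'
      simp only [Finset.mem_filter, Finset.mem_range] at this
      simp only [reEncodeAt]
      rw [if_neg (by omega)]
      congr 1
      omega
    · rw [dif_neg h']
      split_ifs with h
      · rw [Finset.max'_filter_range_succ_eq_zero h h']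
        simp [reEncodeAt]
      · simp [reEncodeAt]

lemma sl_prevEncode (w : List (σ ⊕ π)) : sl (prevEncode w) = prevEncode w.tail := by
  apply ext_getElem (by simp)
  intro i h₁ h₂
  simp [sl, getElem_reEncode, getElem_prevEncode, prevAt_tail]

lemma sl_iterate_prevEncode (w : List (σ ⊕ π)) (k : ℕ) :
    sl^[k] (prevEncode w) = prevEncode (w.drop k) := by
  induction k with
  | zero => rfl
  | succ k ih => rw [Function.iterate_succ_apply', ih, sl_prevEncode, tail_drop]

end Encoding

section PrevSub

variable [DecidableEq σ] [DecidableEq π] {T : List (σ ⊕ π)} {u v : List (σ ⊕ ℕ)}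

lemma finite_prevSub (T : List (σ ⊕ π)) : (PrevSub T).Finite :=
  (T.sublists.toFinset.finite_toSet.image prevEncode).subset fun _ ⟨w, hw, hu⟩ =>
    ⟨w, by simpa using hw.sublist, hu.symm⟩

lemma nil_mem_prevSub (T : List (σ ⊕ π)) : [] ∈ PrevSub T :=
  ⟨[], nil_infix, by simp [prevEncode]⟩

lemma mem_prevSub_of_prefix (hv : v ∈ PrevSub T) (h : u <+: v) : u ∈ PrevSub T := by
  obtain ⟨w, hw, rfl⟩ := hv
  refine ⟨w.take u.length, (take_prefix _ _).isInfix.trans hw, ?_⟩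
  rw [prevEncode_take, ← prefix_iff_eq_take.1 h]

lemma sl_mem_prevSub (hu : u ∈ PrevSub T) : sl u ∈ PrevSub T := by
  obtain ⟨w, hw, rfl⟩ := hu
  exact ⟨w.tail, (tail_suffix w).isInfix.trans hw, sl_prevEncode w⟩

lemma not_isLeaf_of_prefix (hv : v ∈ PrevSub T) (h : u <+: v) (hlt : u.length < v.length) :
    ¬ IsLeaf T u := fun hu => by
  have := congrArg length (hu.2 v hv h)
  omega

/-- A substring `w` of `T` that is not a suffix extends to `w ++ [a]`, so a leaf encodes a
suffix of `T`. -/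
lemma IsLeaf.exists_eq_prevEncode_drop (hu : IsLeaf T u) (hT : T ≠ []) :
    ∃ i < T.length, u = prevEncode (T.drop i) := by
  obtain ⟨w, ⟨s, t, rfl⟩, rfl⟩ := hu.1
  rcases t with _ | ⟨a, t⟩
  · by_cases hw : w = []
    · refine absurd hu (not_isLeaf_of_prefix ⟨_, infix_refl _, rfl⟩ (by simp [hw, prevEncode]) ?_)
      simpa [hw, length_pos_iff] using hT
    · exact ⟨s.length, by simpa [length_pos_iff] using hw, by simp⟩
  · refine absurd hu (not_isLeaf_of_prefix ⟨w ++ [a], ⟨s, t, by simp⟩, rfl⟩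
      (prefix_append w [a]).prevEncode (by simp))

lemma ncard_leaves_prevSub_le (hT : T ≠ []) : (PrevSub T).leaves.ncard ≤ T.length :=
  calc (PrevSub T).leaves.ncard
      ≤ ((Finset.range T.length).image fun i => prevEncode (T.drop i)).card := by
        rw [← Set.ncard_coe_finset]
        refine Set.ncard_le_ncard (fun u hu => ?_) (Finset.finite_toSet _)
        obtain ⟨i, hi, rfl⟩ := IsLeaf.exists_eq_prevEncode_drop hu hT
        simpa using ⟨i, hi, rfl⟩
    _ ≤ T.length := Finset.card_image_le.trans (by simp)

lemma ncard_branchingNodes_prevSub_lt (hT : T ≠ []) :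
    (PrevSub T).branchingNodes.ncard < T.length :=
  (Set.ncard_branchingNodes_lt_ncard_leaves (finite_prevSub T) (nil_mem_prevSub T)
    fun _ hv _ h => mem_prevSub_of_prefix hv h).trans_le (ncard_leaves_prevSub_le hT)

lemma TypeTwo.sl_mem_branchingNodes (hu : TypeTwo T u) : sl u ∈ (PrevSub T).branchingNodes := by
  obtain ⟨hmem, hne, hnot, hleaf | hbr⟩ := hu
  · obtain ⟨v, hv, huv, hne'⟩ : ∃ v ∈ PrevSub T, u <+: v ∧ u ≠ v := by
      by_contra! h
      exact hnot (Or.inl ⟨hmem, h⟩)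
    have hlt : u.length < v.length :=
      huv.length_le.lt_of_ne fun h => hne' (huv.eq_of_length h)
    refine absurd hleaf (not_isLeaf_of_prefix (sl_mem_prevSub hv) huv.sl ?_)
    simpa using Nat.sub_lt_sub_right (length_pos_iff.2 hne) hlt
  · exact hbr

end PrevSub

section LeftmostOccurrence

variable [DecidableEq σ] [DecidableEq π] {T : List (σ ⊕ π)} {u v : List (σ ⊕ ℕ)} {e : ℕ}

def EndsAt (T : List (σ ⊕ π)) (u : List (σ ⊕ ℕ)) (e : ℕ) : Prop :=
  ∃ w, w <:+ T.take e ∧ u = prevEncode w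

noncomputable def leftmostEnd (T : List (σ ⊕ π)) (u : List (σ ⊕ ℕ)) : ℕ :=
  sInf {e | EndsAt T u e}

lemma exists_endsAt (hu : u ∈ PrevSub T) : ∃ e ≤ T.length, EndsAt T u e := by
  obtain ⟨w, ⟨s, t, rfl⟩, rfl⟩ := hu
  exact ⟨s.length + w.length, by simp, w, by rw [take_left' (by simp)]; exact suffix_append s w,
    rfl⟩

lemma EndsAt.length_le (h : EndsAt T u e) : u.length ≤ e := by
  obtain ⟨w, hw, rfl⟩ := h
  simpa using hw.length_le.trans (length_take_le e T)

lemma EndsAt.sl_iterate (h : EndsAt T u e) (k : ℕ) : EndsAt T (sl^[k] u) e := by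
  obtain ⟨w, hw, rfl⟩ := h
  exact ⟨w.drop k, (drop_suffix k w).trans hw, sl_iterate_prevEncode w k⟩

/-- Two occurrences ending at the same position are nested. -/
lemma EndsAt.eq_sl_iterate (hu : EndsAt T u e) (hv : EndsAt T v e)
    (hlen : u.length ≤ v.length) :
    u = sl^[v.length - u.length] v := by
  obtain ⟨wu, hwu, rfl⟩ := hu
  obtain ⟨wv, hwv, rfl⟩ := hv
  simp only [prevEncode_length] at hlen ⊢
  rw [sl_iterate_prevEncode, ← suffix_iff_eq_drop.1 (suffix_of_suffix_length_le hwu hwv hlen)]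

lemma endsAt_leftmostEnd (hu : u ∈ PrevSub T) : EndsAt T u (leftmostEnd T u) :=
  Nat.sInf_mem ((exists_endsAt hu).imp fun _ => And.right)

lemma leftmostEnd_le (h : EndsAt T u e) : leftmostEnd T u ≤ e :=
  Nat.sInf_le h

lemma leftmostEnd_mem_Icc (hu : u ∈ PrevSub T) (hne : u ≠ []) :
    leftmostEnd T u ∈ Set.Icc 1 T.length := by
  obtain ⟨e, he, h⟩ := exists_endsAt hu
  exact ⟨(length_pos_iff.2 hne).trans_le (endsAt_leftmostEnd hu).length_le,
    (leftmostEnd_le h).trans he⟩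

lemma leftmostEnd_sl_le (hu : u ∈ PrevSub T) : leftmostEnd T (sl u) ≤ leftmostEnd T u :=
  leftmostEnd_le ((endsAt_leftmostEnd hu).sl_iterate 1)

/-- If `u` and `v` had the same leftmost end and `u` were shorter, then `u` would be an
iterated suffix link of `sl v`, hence would also occur ending at `leftmostEnd T (sl v)`. -/
lemma injOn_leftmostEnd :
    Set.InjOn (leftmostEnd T) {u ∈ PrevSub T | leftmostEnd T (sl u) < leftmostEnd T u} := by
  intro u ⟨hu, hlu⟩ v ⟨hv, hlv⟩ heq
  wlog hlen : u.length ≤ v.length generalizing u v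
  · exact (this hv hlv hu hlu heq.symm (by omega)).symm
  have hk := (heq ▸ endsAt_leftmostEnd hu).eq_sl_iterate (endsAt_leftmostEnd hv) hlen
  generalize v.length - u.length = k at hk
  rcases k with _ | k
  · exact hk
  · have hend : EndsAt T u (leftmostEnd T (sl v)) := by
      rw [hk, Function.iterate_succ_apply]
      exact (endsAt_leftmostEnd (sl_mem_prevSub hv)).sl_iterate k
    have := leftmostEnd_le hend
    omega

lemma injOn_sl :
    Set.InjOn sl {u ∈ PrevSub T | u ≠ [] ∧ leftmostEnd T (sl u) = leftmostEnd T u} := by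
  intro u ⟨hu, hne, hlu⟩ v ⟨hv, hnev, hlv⟩ hsl
  have heq : leftmostEnd T u = leftmostEnd T v := by rw [← hlu, ← hlv, hsl]
  have hlen : u.length = v.length := by
    have := congrArg length hsl
    simp only [sl_length] at this
    have := length_pos_iff.2 hne
    have := length_pos_iff.2 hnev
    omega
  have hk := (heq ▸ endsAt_leftmostEnd hu).eq_sl_iterate (endsAt_leftmostEnd hv) hlen.le
  rwa [hlen, Nat.sub_self, Function.iterate_zero, id] at hk

end LeftmostOccurrence

theorem card_type2_lt_general [DecidableEq σ] [DecidableEq π]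
    (T' : List (σ ⊕ π)) (d : σ) (T : List (σ ⊕ π))
    (hT : T = T' ++ [Sum.inl d]) :
    {u : List (σ ⊕ ℕ) | TypeTwo T u}.Finite ∧
      {u : List (σ ⊕ ℕ) | TypeTwo T u}.ncard < 2 * T.length := by
  have hne : T ≠ [] := by simp [hT]
  refine ⟨(finite_prevSub T).subset fun u hu => hu.1, ?_⟩
  set A := {u | TypeTwo T u ∧ leftmostEnd T (sl u) < leftmostEnd T u}
  set B := {u | TypeTwo T u ∧ leftmostEnd T (sl u) = leftmostEnd T u}
  have hinjA : Set.InjOn (leftmostEnd T) A :=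
    injOn_leftmostEnd.mono fun _ hu => by exact ⟨hu.1.1, hu.2⟩
  have hinjB : Set.InjOn sl B := injOn_sl.mono fun _ hu => by exact ⟨hu.1.1, hu.1.2.1, hu.2⟩
  have hA : A.ncard ≤ T.length := by
    refine (Set.ncard_le_ncard_of_injOn _ (fun u hu => leftmostEnd_mem_Icc hu.1.1 hu.1.2.1)
      hinjA (Set.finite_Icc _ _)).trans ?_
    rw [← Finset.coe_Icc, Set.ncard_coe_finset, Nat.card_Icc]
    omega
  have hB : B.ncard < T.length :=
    (Set.ncard_le_ncard_of_injOn _ (fun u hu => hu.1.sl_mem_branchingNodes) hinjB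
      ((finite_prevSub T).subset fun _ h => h.1)).trans_lt (ncard_branchingNodes_prevSub_lt hne)
  have hAB : {u | TypeTwo T u} = A ∪ B := by
    ext u
    simp only [Set.mem_ofPred_eq, Set.mem_union, A, B, ← and_or_left]
    exact ⟨fun hu => ⟨hu, (leftmostEnd_sl_le hu.1).lt_or_eq⟩, And.left⟩
  calc {u | TypeTwo T u}.ncard = (A ∪ B).ncard := by rw [hAB]
    _ ≤ A.ncard + B.ncard := Set.ncard_union_le A B
    _ < 2 * T.length := by omega

/-- For a text of length `n ≥ 1` ending with a sentinel occurring nowhere else,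
the number of Type 2 nodes of `PLST(T)` is smaller than `2n`. -/
theorem card_type2_lt [DecidableEq σ] [DecidableEq π]
    (T' : List (σ ⊕ π)) (d : σ) (T : List (σ ⊕ π))
    (hT : T = T' ++ [Sum.inl d]) (hd : Sum.inl d ∉ T') :
    {u : List (σ ⊕ ℕ) | TypeTwo T u}.Finite ∧
      {u : List (σ ⊕ ℕ) | TypeTwo T u}.ncard < 2 * T.length :=
  card_type2_lt_general T' d T hT
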